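/- Let (G_n) be a sequence of graphs where G_n has k_n edges with k_n → ∞ and maximum degree d_n = o(√(k_n)). Form B_n independent random bundles, each including every node of G_n independently with probability r_n = 1/√(2 k_n). If B_n ≥ (4+ε)·k_n·ln k_n for some fixed ε > 0, then the probability that every edge of G_n is, in at least one bundle, the unique edge of G_n covered by that bundle, tends to 1 as n → ∞. -/
import Mathlib


open scoped BigOperators Classical
open Finset Filter

noncomputable section

/-- The set of all potential edges: unordered pairs of distinct nodes of `Fin n`. -/
def allPairs (n : ℕ) : Finset (Sym2 (Fin n)) :=
  Finset.univ.filter fun e => ¬ e.IsDiag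

/-- Both endpoints of the pair `e` lie in the test `L`. -/
def pairIn {n : ℕ} (e : Sym2 (Fin n)) (L : Finset (Fin n)) : Prop :=
  ∀ v ∈ e, v ∈ L

/-- The test `L` covers some edge of the edge set `E` (positive outcome `Y = 1`). -/
def covers {n : ℕ} (E : Finset (Sym2 (Fin n))) (L : Finset (Fin n)) : Prop :=
  ∃ e ∈ E, pairIn e L

/-- ER(n,q) probability weight of a given edge set `E`. -/
def erWeight (n : ℕ) (q : ℝ) (E : Finset (Sym2 (Fin n))) : ℝ :=
  q ^ E.card * (1 - q) ^ ((allPairs n).card - E.card)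

/-- Probability of an event under the Erdős–Rényi random graph ER(n,q). -/
def erProb (n : ℕ) (q : ℝ) (A : Finset (Sym2 (Fin n)) → Prop) : ℝ :=
  ∑ E ∈ (allPairs n).powerset, if A E then erWeight n q E else 0

/-- Bernoulli(p) probability weight of a single test `L ⊆ {1,…,n}`. -/
def testWeight (n : ℕ) (p : ℝ) (L : Finset (Fin n)) : ℝ :=
  p ^ L.card * (1 - p) ^ (n - L.card)

/-- Probability of an event for a single Bernoulli(p) test. -/
def bernProb (n : ℕ) (p : ℝ) (A : Finset (Fin n) → Prop) : ℝ :=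
  ∑ L : Finset (Fin n), if A L then testWeight n p L else 0

/-- Probability weight of `t` i.i.d. Bernoulli(p) tests. -/
def testsWeight (n t : ℕ) (p : ℝ) (Ls : Fin t → Finset (Fin n)) : ℝ :=
  ∏ i, testWeight n p (Ls i)

/-- Probability of an event for `t` i.i.d. Bernoulli(p) tests. -/
def bernTestsProb (n t : ℕ) (p : ℝ) (A : (Fin t → Finset (Fin n)) → Prop) : ℝ :=
  ∑ Ls : Fin t → Finset (Fin n), if A Ls then testsWeight n t p Ls else 0

/-- Joint probability over an ER(n,q) graph and `t` i.i.d. Bernoulli(p) tests. -/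
def erTestsProb (n t : ℕ) (q p : ℝ)
    (A : Finset (Sym2 (Fin n)) → (Fin t → Finset (Fin n)) → Prop) : ℝ :=
  ∑ E ∈ (allPairs n).powerset, ∑ Ls : Fin t → Finset (Fin n),
    if A E Ls then erWeight n q E * testsWeight n t p Ls else 0

/-- Degree of node `v` in the edge set `E`. -/
def degOf {n : ℕ} (E : Finset (Sym2 (Fin n))) (v : Fin n) : ℕ :=
  (E.filter fun e => v ∈ e).card

/-- Maximum degree of the edge set `E`. -/
def maxDeg {n : ℕ} (E : Finset (Sym2 (Fin n))) : ℕ :=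
  Finset.univ.sup (degOf E)

/-- Average number of edges of ER(n, q n): `k̄ = q·C(n,2)`. -/
def kbar (q : ℕ → ℝ) (n : ℕ) : ℝ := q n * (n.choose 2 : ℝ)

/-- Two pairs are vertex-disjoint. -/
def sym2Disjoint {n : ℕ} (e e' : Sym2 (Fin n)) : Prop := ∀ v, v ∈ e → v ∉ e'

lemma sum_pow_mul {α : Type*} (s : Finset α) (p : ℝ) :
    ∑ M ∈ s.powerset, p ^ M.card * (1 - p) ^ (s.card - M.card) = 1 := by
  have h := (Finset.prod_add (fun _ : α => p) (fun _ : α => (1 - p)) s).symm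
  simp only [add_sub_cancel, Finset.prod_const, one_pow] at h
  refine Eq.trans (Finset.sum_congr rfl ?_) h
  intro M hM
  rw [Finset.mem_powerset] at hM
  rw [Finset.card_sdiff_of_subset hM]

lemma sum_testWeight (n : ℕ) (p : ℝ) : ∑ L : Finset (Fin n), testWeight n p L = 1 := by
  have h := sum_pow_mul (Finset.univ : Finset (Fin n)) p
  rw [Finset.powerset_univ] at h
  simpa [testWeight, Finset.card_univ] using h

lemma testWeight_nonneg {n : ℕ} {p : ℝ} (hp0 : 0 ≤ p) (hp1 : p ≤ 1) (L : Finset (Fin n)) :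
    0 ≤ testWeight n p L :=
  mul_nonneg (pow_nonneg hp0 _) (pow_nonneg (by linarith) _)

lemma bernProb_superset {n : ℕ} {p : ℝ} (S : Finset (Fin n)) :
    bernProb n p (fun L => S ⊆ L) = p ^ S.card := by
  have h1 : bernProb n p (fun L => S ⊆ L)
      = ∑ L ∈ @Finset.filter _ (fun L => S ⊆ L) (fun L => Classical.propDecidable _) Finset.univ,
          testWeight n p L := by
    unfold bernProb
    beta_reduce
    exact (@Finset.sum_filter _ _ _ _ _ (fun L => Classical.propDecidable _) _).symm
  rw [h1]
  have key : ∑ L ∈ @Finset.filter _ (fun L => S ⊆ L) (fun L => Classical.propDecidable _) Finset.univ,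
        testWeight n p L
      = ∑ M ∈ (Finset.univ \ S).powerset, testWeight n p (S ∪ M) := by
    refine Finset.sum_nbij' (fun L => L \ S) (fun M => S ∪ M) ?_ ?_ ?_ ?_ ?_
    · intro L hL
      simp only [Finset.mem_filter, Finset.mem_univ, true_and] at hL
      rw [Finset.mem_powerset]
      exact Finset.sdiff_subset_sdiff (Finset.subset_univ L) le_rfl
    · intro M hM
      simp only [Finset.mem_filter, Finset.mem_univ, true_and]
      exact Finset.subset_union_left
    · intro L hL
      simp only [Finset.mem_filter, Finset.mem_univ, true_and] at hL
      exact Finset.union_sdiff_of_subset hL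
    · intro M hM
      rw [Finset.mem_powerset] at hM
      rw [Finset.union_sdiff_cancel_left]
      rw [Finset.disjoint_left]
      intro a ha haM
      exact (Finset.mem_sdiff.mp (hM haM)).2 ha
    · intro L hL
      simp only [Finset.mem_filter, Finset.mem_univ, true_and] at hL
      rw [Finset.union_sdiff_of_subset hL]
  rw [key]
  have hcard : ∀ M ∈ (Finset.univ \ S).powerset, testWeight n p (S ∪ M)
      = p ^ S.card * (p ^ M.card * (1 - p) ^ ((Finset.univ \ S).card - M.card)) := by
    intro M hM
    rw [Finset.mem_powerset] at hM
    have hdisj : Disjoint S M := by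
      rw [Finset.disjoint_right]
      intro a haM
      exact (Finset.mem_sdiff.mp (hM haM)).2
    have hcu : (S ∪ M).card = S.card + M.card := Finset.card_union_of_disjoint hdisj
    have hsd : ((Finset.univ : Finset (Fin n)) \ S).card = n - S.card := by
      rw [Finset.card_sdiff_of_subset (Finset.subset_univ S), Finset.card_univ, Fintype.card_fin]
    unfold testWeight
    rw [hcu, hsd, pow_add, Nat.sub_sub]
    ring
  rw [Finset.sum_congr rfl hcard, ← Finset.mul_sum, sum_pow_mul, mul_one]

lemma bernProb_congr {n : ℕ} {p : ℝ} {A B : Finset (Fin n) → Prop}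
    (h : ∀ L, A L ↔ B L) : bernProb n p A = bernProb n p B :=
  Finset.sum_congr rfl fun L _ => if_congr (h L) rfl rfl

variable {n : ℕ} {p : ℝ}

lemma bernProb_nonneg (hp0 : 0 ≤ p) (hp1 : p ≤ 1) (A : Finset (Fin n) → Prop) :
    0 ≤ bernProb n p A := by
  apply Finset.sum_nonneg
  intro L _
  split
  · exact testWeight_nonneg hp0 hp1 L
  · exact le_rfl

lemma bernProb_mono (hp0 : 0 ≤ p) (hp1 : p ≤ 1) {A B : Finset (Fin n) → Prop}
    (h : ∀ L, A L → B L) : bernProb n p A ≤ bernProb n p B := by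
  apply Finset.sum_le_sum
  intro L _
  by_cases hA : A L
  · rw [if_pos hA, if_pos (h L hA)]
  · rw [if_neg hA]
    split
    · exact testWeight_nonneg hp0 hp1 L
    · exact le_rfl

lemma bernProb_le_one (hp0 : 0 ≤ p) (hp1 : p ≤ 1) (A : Finset (Fin n) → Prop) :
    bernProb n p A ≤ 1 := by
  rw [← sum_testWeight n p]
  apply Finset.sum_le_sum
  intro L _
  split
  · exact le_rfl
  · exact testWeight_nonneg hp0 hp1 L

lemma bernProb_compl (hp0 : 0 ≤ p) (hp1 : p ≤ 1) (A : Finset (Fin n) → Prop) :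
    bernProb n p (fun L => ¬ A L) = 1 - bernProb n p A := by
  unfold bernProb
  rw [eq_sub_iff_add_eq, ← sum_testWeight n p, ← Finset.sum_add_distrib]
  apply Finset.sum_congr rfl
  intro L _
  by_cases hA : A L
  · simp [hA]
  · simp [hA]

lemma bernProb_or (hp0 : 0 ≤ p) (hp1 : p ≤ 1) (A B : Finset (Fin n) → Prop) :
    bernProb n p (fun L => A L ∨ B L) ≤ bernProb n p A + bernProb n p B := by
  unfold bernProb
  rw [← Finset.sum_add_distrib]
  apply Finset.sum_le_sum
  intro L _
  have := testWeight_nonneg hp0 hp1 L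
  by_cases hA : A L <;> by_cases hB : B L <;> simp [hA, hB] <;> linarith

lemma bernProb_exists_le {β : Type*} (hp0 : 0 ≤ p) (hp1 : p ≤ 1) (F : Finset β)
    (A : β → Finset (Fin n) → Prop) :
    bernProb n p (fun L => ∃ e ∈ F, A e L) ≤ ∑ e ∈ F, bernProb n p (A e) := by
  unfold bernProb
  rw [Finset.sum_comm]
  apply Finset.sum_le_sum
  intro L _
  by_cases h : ∃ e ∈ F, A e L
  · obtain ⟨e, heF, hA⟩ := h
    rw [if_pos ⟨e, heF, hA⟩]
    calc testWeight n p L = (if A e L then testWeight n p L else 0) := by rw [if_pos hA]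
      _ ≤ ∑ e ∈ F, (if A e L then testWeight n p L else 0) := by
          apply Finset.single_le_sum (f := fun e => if A e L then testWeight n p L else 0) ?_ heF
          intro e _
          split
          · exact testWeight_nonneg hp0 hp1 L
          · exact le_rfl
  · rw [if_neg h]
    apply Finset.sum_nonneg
    intro e _
    split
    · exact testWeight_nonneg hp0 hp1 L
    · exact le_rfl

def vset {n : ℕ} (e : Sym2 (Fin n)) : Finset (Fin n) :=
  Finset.univ.filter (fun v => v ∈ e)

lemma mem_vset {n : ℕ} {e : Sym2 (Fin n)} {v : Fin n} : v ∈ vset e ↔ v ∈ e := by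
  simp [vset]

lemma pairIn_iff {n : ℕ} (e : Sym2 (Fin n)) (L : Finset (Fin n)) :
    pairIn e L ↔ vset e ⊆ L := by
  constructor
  · intro h v hv
    exact h v (mem_vset.mp hv)
  · intro h v hv
    exact h (mem_vset.mpr hv)

lemma vset_card {n : ℕ} {e : Sym2 (Fin n)} (he : ¬ e.IsDiag) : (vset e).card = 2 := by
  induction e using Sym2.ind with
  | _ a b =>
    have hab : a ≠ b := by
      intro h; exact he (by simp [h])
    have : vset (s(a, b)) = {a, b} := by
      ext v; simp [mem_vset, Sym2.mem_iff]
    rw [this, Finset.card_pair hab]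

lemma vset_inj {n : ℕ} {e e' : Sym2 (Fin n)} (h : vset e = vset e') : e = e' := by
  apply Sym2.ext
  intro x
  rw [← mem_vset, ← mem_vset, h]

lemma vset_card_le {n : ℕ} (e : Sym2 (Fin n)) : (vset e).card ≤ 2 := by
  induction e using Sym2.ind with
  | _ a b =>
    have : vset (s(a, b)) ⊆ {a, b} := by
      intro v hv; simp [mem_vset, Sym2.mem_iff] at hv ⊢; exact hv
    calc (vset (s(a,b))).card ≤ ({a, b} : Finset (Fin n)).card := Finset.card_le_card this
      _ ≤ 2 := Finset.card_insert_le a {b} |>.trans (by simp)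

lemma three_le_union_card {n : ℕ} {e e' : Sym2 (Fin n)} (he : ¬ e.IsDiag) (he' : ¬ e'.IsDiag)
    (hne : e' ≠ e) : 3 ≤ (vset e ∪ vset e').card := by
  have h2 : (vset e).card = 2 := vset_card he
  have h2' : (vset e').card = 2 := vset_card he'
  have hne' : vset e ≠ vset e' := fun h => hne (vset_inj h.symm)
  have hss : vset e ⊂ vset e ∪ vset e' := by
    rw [Finset.ssubset_iff_subset_ne]
    refine ⟨Finset.subset_union_left, ?_⟩
    intro h
    have : vset e' ⊆ vset e := by
      rw [h]; exact Finset.subset_union_right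
    exact hne' ((Finset.eq_of_subset_of_card_le this (by omega)).symm)
  have := Finset.card_lt_card hss
  omega

-- key single-test lower bound

lemma bernProb_unique_ge {n : ℕ} {p : ℝ} (hp0 : 0 ≤ p) (hp1 : p ≤ 1)
    (Em : Finset (Sym2 (Fin n))) (hsimple : ∀ e ∈ Em, ¬ e.IsDiag)
    {e : Sym2 (Fin n)} (he : e ∈ Em) :
    p ^ 2 - 2 * (maxDeg Em : ℝ) * p ^ 3 - (Em.card : ℝ) * p ^ 4
      ≤ bernProb n p (fun L => pairIn e L ∧ ∀ e' ∈ Em, e' ≠ e → ¬ pairIn e' L) := by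
  have hed : ¬ e.IsDiag := hsimple e he
  -- p^2 = P(pairIn e)
  have hpe : bernProb n p (fun L => pairIn e L) = p ^ 2 := by
    rw [bernProb_congr (fun L => pairIn_iff e L), bernProb_superset, vset_card hed]
  -- split
  have hsplit : bernProb n p (fun L => pairIn e L)
      ≤ bernProb n p (fun L => pairIn e L ∧ ∀ e' ∈ Em, e' ≠ e → ¬ pairIn e' L)
        + bernProb n p (fun L => ∃ e' ∈ Em.erase e, pairIn e L ∧ pairIn e' L) := by
    refine le_trans (bernProb_mono hp0 hp1 ?_) (bernProb_or hp0 hp1 _ _)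
    intro L hL
    by_cases hu : ∀ e' ∈ Em, e' ≠ e → ¬ pairIn e' L
    · exact Or.inl ⟨hL, hu⟩
    · push_neg at hu
      obtain ⟨e', he'Em, hne, hpi⟩ := hu
      exact Or.inr ⟨e', Finset.mem_erase.mpr ⟨hne, he'Em⟩, hL, hpi⟩
  -- bound residual
  have hres : bernProb n p (fun L => ∃ e' ∈ Em.erase e, pairIn e L ∧ pairIn e' L)
      ≤ 2 * (maxDeg Em : ℝ) * p ^ 3 + (Em.card : ℝ) * p ^ 4 := by
    refine le_trans (bernProb_exists_le hp0 hp1 _ _) ?_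
    have hval : ∀ e' ∈ Em.erase e,
        bernProb n p (fun L => pairIn e L ∧ pairIn e' L) = p ^ (vset e ∪ vset e').card := by
      intro e' he'
      rw [bernProb_congr (B := fun L => vset e ∪ vset e' ⊆ L), bernProb_superset]
      intro L
      rw [pairIn_iff, pairIn_iff, Finset.union_subset_iff]
    rw [Finset.sum_congr rfl hval]
    rw [← Finset.sum_filter_add_sum_filter_not (Em.erase e)
      (fun e' => ¬ Disjoint (vset e) (vset e'))]
    have hbound1 : ∑ e' ∈ (Em.erase e).filter (fun e' => ¬ Disjoint (vset e) (vset e')),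
        p ^ (vset e ∪ vset e').card ≤ 2 * (maxDeg Em : ℝ) * p ^ 3 := by
      have hle : ∀ e' ∈ (Em.erase e).filter (fun e' => ¬ Disjoint (vset e) (vset e')),
          p ^ (vset e ∪ vset e').card ≤ p ^ 3 := by
        intro e' he'
        rw [Finset.mem_filter, Finset.mem_erase] at he'
        exact pow_le_pow_of_le_one hp0 hp1
          (three_le_union_card hed (hsimple e' he'.1.2) he'.1.1)
      refine le_trans (Finset.sum_le_sum hle) ?_
      rw [Finset.sum_const, nsmul_eq_mul]
      have hcard : ((Em.erase e).filter (fun e' => ¬ Disjoint (vset e) (vset e'))).card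
          ≤ 2 * maxDeg Em := by
        have hsub : (Em.erase e).filter (fun e' => ¬ Disjoint (vset e) (vset e'))
            ⊆ (vset e).biUnion (fun v => Em.filter (fun e' => v ∈ e')) := by
          intro e' he'
          rw [Finset.mem_filter, Finset.mem_erase] at he'
          obtain ⟨⟨hne, hmem⟩, hnd⟩ := he'
          rw [Finset.not_disjoint_iff] at hnd
          obtain ⟨v, hv1, hv2⟩ := hnd
          rw [Finset.mem_biUnion]
          exact ⟨v, hv1, Finset.mem_filter.mpr ⟨hmem, mem_vset.mp hv2⟩⟩
        refine le_trans (Finset.card_le_card hsub) ?_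
        refine le_trans Finset.card_biUnion_le ?_
        have : ∀ v ∈ vset e, (Em.filter (fun e' => v ∈ e')).card ≤ maxDeg Em := by
          intro v _
          show degOf Em v ≤ maxDeg Em
          exact Finset.le_sup (Finset.mem_univ v)
        refine le_trans (Finset.sum_le_sum this) ?_
        rw [Finset.sum_const, vset_card hed, smul_eq_mul]
      have hp3 : (0:ℝ) ≤ p ^ 3 := pow_nonneg hp0 3
      calc (((Em.erase e).filter (fun e' => ¬ Disjoint (vset e) (vset e'))).card : ℝ) * p ^ 3
          ≤ (2 * (maxDeg Em : ℝ)) * p ^ 3 := by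
            apply mul_le_mul_of_nonneg_right _ hp3
            exact_mod_cast hcard
        _ = 2 * (maxDeg Em : ℝ) * p ^ 3 := by ring
    have hbound2 : ∑ e' ∈ (Em.erase e).filter (fun e' => ¬ ¬ Disjoint (vset e) (vset e')),
        p ^ (vset e ∪ vset e').card ≤ (Em.card : ℝ) * p ^ 4 := by
      have hle : ∀ e' ∈ (Em.erase e).filter (fun e' => ¬ ¬ Disjoint (vset e) (vset e')),
          p ^ (vset e ∪ vset e').card ≤ p ^ 4 := by
        intro e' he'
        rw [Finset.mem_filter, Finset.mem_erase, not_not] at he'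
        obtain ⟨⟨hne, hmem⟩, hd⟩ := he'
        rw [Finset.card_union_of_disjoint hd, vset_card hed, vset_card (hsimple e' hmem)]
      refine le_trans (Finset.sum_le_sum hle) ?_
      rw [Finset.sum_const, nsmul_eq_mul]
      apply mul_le_mul_of_nonneg_right _ (pow_nonneg hp0 4)
      have : ((Em.erase e).filter (fun e' => ¬ ¬ Disjoint (vset e) (vset e'))).card ≤ Em.card :=
        Finset.card_le_card (le_trans (Finset.filter_subset _ _) (Finset.erase_subset e Em))
      exact_mod_cast this
    linarith
  linarith

lemma sum_fn_prod {n t : ℕ} (f : Finset (Fin n) → ℝ) :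
    ∑ Ls : Fin t → Finset (Fin n), ∏ b, f (Ls b) = (∑ L : Finset (Fin n), f L) ^ t := by
  have h := Finset.prod_univ_sum (fun _ : Fin t => (Finset.univ : Finset (Finset (Fin n))))
    (fun _ L => f L)
  rw [Fintype.piFinset_univ] at h
  rw [← h, Finset.prod_const, Finset.card_univ, Fintype.card_fin]

lemma bernTestsProb_congr {n t : ℕ} {p : ℝ} {A B : (Fin t → Finset (Fin n)) → Prop}
    (h : ∀ Ls, A Ls ↔ B Ls) : bernTestsProb n t p A = bernTestsProb n t p B :=
  Finset.sum_congr rfl fun Ls _ => if_congr (h Ls) rfl rfl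

lemma testsWeight_nonneg {n t : ℕ} {p : ℝ} (hp0 : 0 ≤ p) (hp1 : p ≤ 1)
    (Ls : Fin t → Finset (Fin n)) : 0 ≤ testsWeight n t p Ls :=
  Finset.prod_nonneg fun i _ => testWeight_nonneg hp0 hp1 (Ls i)

lemma bernTestsProb_nonneg {n t : ℕ} {p : ℝ} (hp0 : 0 ≤ p) (hp1 : p ≤ 1)
    (A : (Fin t → Finset (Fin n)) → Prop) : 0 ≤ bernTestsProb n t p A := by
  apply Finset.sum_nonneg
  intro Ls _
  split
  · exact testsWeight_nonneg hp0 hp1 Ls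
  · exact le_rfl

lemma bernTestsProb_all {n t : ℕ} {p : ℝ} (C : Finset (Fin n) → Prop) :
    bernTestsProb n t p (fun Ls => ∀ b, C (Ls b)) = (bernProb n p C) ^ t := by
  unfold bernTestsProb bernProb
  rw [← sum_fn_prod (fun L => if C L then testWeight n p L else 0)]
  apply Finset.sum_congr rfl
  intro Ls _
  by_cases h : ∀ b, C (Ls b)
  · rw [if_pos h]
    unfold testsWeight
    apply Finset.prod_congr rfl
    intro b _
    rw [if_pos (h b)]
  · rw [if_neg h]
    push_neg at h
    obtain ⟨b, hb⟩ := h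
    rw [eq_comm]
    apply Finset.prod_eq_zero (Finset.mem_univ b)
    rw [if_neg hb]

lemma sum_testsWeight (n t : ℕ) (p : ℝ) :
    ∑ Ls : Fin t → Finset (Fin n), testsWeight n t p Ls = 1 := by
  unfold testsWeight
  rw [sum_fn_prod (testWeight n p), sum_testWeight, one_pow]

lemma bernTestsProb_compl {n t : ℕ} {p : ℝ} (A : (Fin t → Finset (Fin n)) → Prop) :
    bernTestsProb n t p (fun Ls => ¬ A Ls) = 1 - bernTestsProb n t p A := by
  unfold bernTestsProb
  rw [eq_sub_iff_add_eq, ← sum_testsWeight n t p, ← Finset.sum_add_distrib]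
  apply Finset.sum_congr rfl
  intro Ls _
  by_cases hA : A Ls
  · simp [hA]
  · simp [hA]

lemma bernTestsProb_exists_le {n t : ℕ} {p : ℝ} {β : Type*} (hp0 : 0 ≤ p) (hp1 : p ≤ 1)
    (F : Finset β) (A : β → (Fin t → Finset (Fin n)) → Prop) :
    bernTestsProb n t p (fun Ls => ∃ e ∈ F, A e Ls)
      ≤ ∑ e ∈ F, bernTestsProb n t p (A e) := by
  unfold bernTestsProb
  rw [Finset.sum_comm]
  apply Finset.sum_le_sum
  intro Ls _
  by_cases h : ∃ e ∈ F, A e Ls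
  · obtain ⟨e, heF, hA⟩ := h
    rw [if_pos ⟨e, heF, hA⟩]
    calc testsWeight n t p Ls = (if A e Ls then testsWeight n t p Ls else 0) := by rw [if_pos hA]
      _ ≤ ∑ e ∈ F, (if A e Ls then testsWeight n t p Ls else 0) := by
          apply Finset.single_le_sum (f := fun e => if A e Ls then testsWeight n t p Ls else 0)
            ?_ heF
          intro e _
          split
          · exact testsWeight_nonneg hp0 hp1 Ls
          · exact le_rfl
  · rw [if_neg h]
    apply Finset.sum_nonneg
    intro e _
    split
    · exact testsWeight_nonneg hp0 hp1 Ls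
    · exact le_rfl

lemma main_bound (n t : ℕ) (p : ℝ) (hp0 : 0 ≤ p) (hp1 : p ≤ 1)
    (Em : Finset (Sym2 (Fin n))) (hsimple : ∀ e ∈ Em, ¬ e.IsDiag) (q : ℝ)
    (hq : q ≤ p ^ 2 - 2 * (maxDeg Em : ℝ) * p ^ 3 - (Em.card : ℝ) * p ^ 4) :
    bernTestsProb n t p (fun Ls => ∃ e ∈ Em, ∀ b, ¬ (pairIn e (Ls b) ∧
        ∀ e' ∈ Em, e' ≠ e → ¬ pairIn e' (Ls b)))
      ≤ (Em.card : ℝ) * (1 - q) ^ t := by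
  refine le_trans (bernTestsProb_exists_le hp0 hp1 Em _) ?_
  have hterm : ∀ e ∈ Em, bernTestsProb n t p (fun Ls => ∀ b, ¬ (pairIn e (Ls b) ∧
      ∀ e' ∈ Em, e' ≠ e → ¬ pairIn e' (Ls b))) ≤ (1 - q) ^ t := by
    intro e he
    set U : Finset (Fin n) → Prop :=
      fun L => pairIn e L ∧ ∀ e' ∈ Em, e' ≠ e → ¬ pairIn e' L with hU
    have h1 : bernTestsProb n t p (fun Ls => ∀ b, ¬ U (Ls b))
        = (bernProb n p (fun L => ¬ U L)) ^ t := bernTestsProb_all (fun L => ¬ U L)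
    rw [h1, bernProb_compl hp0 hp1]
    apply pow_le_pow_left₀
    · have := bernProb_le_one hp0 hp1 U
      linarith
    · have := bernProb_unique_ge hp0 hp1 Em hsimple he
      have h2 : q ≤ bernProb n p U := le_trans hq this
      linarith
  refine le_trans (Finset.sum_le_sum hterm) ?_
  rw [Finset.sum_const, nsmul_eq_mul]

set_option maxHeartbeats 1000000 in
/-- enough bundles cover every edge uniquely.
Let `(G_m)` be graphs with `k_m → ∞` edges and maximum degree `d_m = o(√k_m)`.  Form `B_m`
independent random bundles, each including every node independently with probability
`r_m = 1/√(2 k_m)`.  If `B_m ≥ (4+ε)·k_m·ln k_m` for a fixed `ε > 0`, then with probability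
tending to one every edge is, in some bundle, the unique covered edge. -/
theorem statement16 (V : ℕ → ℕ) (E : (m : ℕ) → Finset (Sym2 (Fin (V m))))
    (hsimple : ∀ m, ∀ e ∈ E m, ¬ e.IsDiag)
    (hk : Tendsto (fun m => (E m).card) atTop atTop)
    (hd : Tendsto (fun m => (maxDeg (E m) : ℝ) / Real.sqrt ((E m).card)) atTop (nhds 0))
    (B : ℕ → ℕ) (ε : ℝ) (hε : 0 < ε)
    (hB : ∀ m : ℕ, (4 + ε) * ((E m).card : ℝ) * Real.log ((E m).card) ≤ (B m : ℝ)) :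
    Tendsto (fun m => bernTestsProb (V m) (B m) (1 / Real.sqrt (2 * ((E m).card : ℝ)))
        (fun Ls => ∀ e ∈ E m, ∃ b, pairIn e (Ls b) ∧
          ∀ e' ∈ E m, e' ≠ e → ¬ pairIn e' (Ls b)))
      atTop (nhds 1) := by
  set r : ℕ → ℝ := fun m => 1 / Real.sqrt (2 * ((E m).card : ℝ)) with hr
  have hr0 : ∀ m, 0 ≤ r m := fun m => by positivity
  have hr1 : ∀ m, r m ≤ 1 := by
    intro m
    rcases Nat.eq_zero_or_pos (E m).card with h | h
    · simp [hr, h]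
    · have h1 : (1:ℝ) ≤ 2 * ((E m).card : ℝ) := by
        have : (1:ℝ) ≤ ((E m).card : ℝ) := by exact_mod_cast h
        linarith
      rw [hr]
      simp only
      rw [div_le_one (by positivity)]
      exact Real.one_le_sqrt.mpr h1
  -- bad event probability
  set bad : ℕ → ℝ := fun m => bernTestsProb (V m) (B m) (r m)
    (fun Ls => ∃ e ∈ E m, ∀ b, ¬ (pairIn e (Ls b) ∧
      ∀ e' ∈ E m, e' ≠ e → ¬ pairIn e' (Ls b))) with hbad
  have hgood : ∀ m, bernTestsProb (V m) (B m) (r m)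
      (fun Ls => ∀ e ∈ E m, ∃ b, pairIn e (Ls b) ∧
        ∀ e' ∈ E m, e' ≠ e → ¬ pairIn e' (Ls b)) = 1 - bad m := by
    intro m
    rw [hbad]
    rw [← bernTestsProb_compl]
    apply bernTestsProb_congr
    intro Ls
    constructor
    · intro h hex
      obtain ⟨e, he, hall⟩ := hex
      obtain ⟨b, hb⟩ := h e he
      exact hall b hb
    · intro h e he
      by_contra hno
      exact h ⟨e, he, not_exists.mp hno⟩
  have hbad0 : Tendsto bad atTop (nhds 0) := by
    set δ0 : ℝ := min (ε / (8 * (4 + ε))) (1/8) with hδ0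
    have hδ0pos : 0 < δ0 := lt_min (by positivity) (by norm_num)
    have hδ0_eighth : δ0 ≤ 1/8 := min_le_right _ _
    have hev1 : ∀ᶠ m in atTop, 1 ≤ (E m).card := hk.eventually_ge_atTop 1
    have hev2 : ∀ᶠ m in atTop,
        (maxDeg (E m) : ℝ) / Real.sqrt ((E m).card) < δ0 := hd.eventually_lt_const hδ0pos
    have hbound : ∀ᶠ m in atTop, bad m ≤ ((E m).card : ℝ) ^ (-(ε/8) : ℝ) := by
      filter_upwards [hev1, hev2] with m hk1 hd1
      have hK1 : (1:ℝ) ≤ ((E m).card : ℝ) := by exact_mod_cast hk1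
      have hK0 : (0:ℝ) < ((E m).card : ℝ) := by linarith
      have hd0 : (0:ℝ) ≤ (maxDeg (E m) : ℝ) := Nat.cast_nonneg _
      have hs0 : 0 < Real.sqrt (2 * ((E m).card : ℝ)) := Real.sqrt_pos.mpr (by linarith)
      have hr2 : r m ^ 2 = 1 / (2 * ((E m).card : ℝ)) := by
        rw [hr]
        simp only
        rw [div_pow, one_pow, Real.sq_sqrt (by linarith)]
      have hdr : (maxDeg (E m) : ℝ) * r m ≤ δ0 := by
        have h1 : (maxDeg (E m) : ℝ) * r m
            = (maxDeg (E m) : ℝ) / Real.sqrt (2 * ((E m).card : ℝ)) := by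
          rw [hr]; simp only; ring
        have h2 : Real.sqrt ((E m).card : ℝ) ≤ Real.sqrt (2 * ((E m).card : ℝ)) :=
          Real.sqrt_le_sqrt (by linarith)
        have h4 : 0 < Real.sqrt ((E m).card : ℝ) := Real.sqrt_pos.mpr hK0
        have h3 : (maxDeg (E m) : ℝ) / Real.sqrt (2 * ((E m).card : ℝ))
            ≤ (maxDeg (E m) : ℝ) / Real.sqrt ((E m).card : ℝ) :=
          div_le_div_of_nonneg_left hd0 h4 h2
        linarith
      -- abbreviations
      have hq' : r m ^ 2 - 2 * (maxDeg (E m) : ℝ) * r m ^ 3 - ((E m).card : ℝ) * r m ^ 4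
          = (1/4 - (maxDeg (E m) : ℝ) * r m) / ((E m).card : ℝ) := by
        have h3 : r m ^ 3 = r m * r m ^ 2 := by ring
        have h4 : r m ^ 4 = (r m ^ 2) ^ 2 := by ring
        rw [h3, h4, hr2]
        field_simp
        ring
      set q : ℝ := (1/4 - (maxDeg (E m) : ℝ) * r m) / ((E m).card : ℝ) with hqdef
      have hnum0 : 0 ≤ 1/4 - (maxDeg (E m) : ℝ) * r m := by
        have : (maxDeg (E m) : ℝ) * r m ≤ 1/8 := le_trans hdr hδ0_eighth
        linarith
      have hq0 : 0 ≤ q := div_nonneg hnum0 (le_of_lt hK0)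
      have hq14 : q ≤ 1/4 - (maxDeg (E m) : ℝ) * r m := div_le_self hnum0 hK1
      have h1q0 : 0 ≤ 1 - q := by
        have := mul_nonneg hd0 (hr0 m)
        linarith
      have hbadle : bad m ≤ ((E m).card : ℝ) * (1 - q) ^ (B m) := by
        rw [hbad]
        exact main_bound (V m) (B m) (r m) (hr0 m) (hr1 m) (E m) (hsimple m) q (le_of_eq hq'.symm)
      have hexp1 : (1 - q) ^ (B m) ≤ Real.exp (-q) ^ (B m) := by
        apply pow_le_pow_left₀ h1q0
        linarith [Real.add_one_le_exp (-q)]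
      have hexp2 : Real.exp (-q) ^ (B m) = Real.exp ((B m : ℝ) * (-q)) :=
        (Real.exp_nat_mul _ _).symm
      -- the exponent bound
      have hlog0 : 0 ≤ Real.log ((E m).card : ℝ) := Real.log_nonneg hK1
      have hqK : q * ((E m).card : ℝ) = 1/4 - (maxDeg (E m) : ℝ) * r m := by
        rw [hqdef, div_mul_cancel₀ _ (ne_of_gt hK0)]
      have hBq : (1 + ε/8) * Real.log ((E m).card : ℝ) ≤ q * (B m : ℝ) := by
        have step1 : q * ((4+ε) * ((E m).card : ℝ) * Real.log ((E m).card : ℝ)) ≤ q * (B m : ℝ) := by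
          apply mul_le_mul_of_nonneg_left _ hq0
          have := hB m
          linarith
        have step2 : (1 + ε/8) * Real.log ((E m).card : ℝ)
            ≤ q * ((4+ε) * ((E m).card : ℝ) * Real.log ((E m).card : ℝ)) := by
          have h1 : q * ((4+ε) * ((E m).card : ℝ) * Real.log ((E m).card : ℝ))
              = ((1/4 - (maxDeg (E m) : ℝ) * r m) * (4+ε)) * Real.log ((E m).card : ℝ) := by
            calc q * ((4+ε) * ((E m).card : ℝ) * Real.log ((E m).card : ℝ))
                = (q * ((E m).card : ℝ)) * ((4+ε) * Real.log ((E m).card : ℝ)) := by ring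
              _ = ((1/4 - (maxDeg (E m) : ℝ) * r m) * (4+ε)) * Real.log ((E m).card : ℝ) := by
                  rw [hqK]; ring
          rw [h1]
          apply mul_le_mul_of_nonneg_right _ hlog0
          have hdrε : (maxDeg (E m) : ℝ) * r m ≤ ε/(8*(4+ε)) := le_trans hdr (min_le_left _ _)
          have h4ε : (0:ℝ) < 4 + ε := by linarith
          have h2 : ((maxDeg (E m) : ℝ) * r m) * (4+ε) ≤ ε/8 := by
            calc ((maxDeg (E m) : ℝ) * r m) * (4+ε) ≤ (ε/(8*(4+ε))) * (4+ε) :=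
                mul_le_mul_of_nonneg_right hdrε (le_of_lt h4ε)
              _ = ε/8 := by field_simp
          have hexpand : (1/4 - (maxDeg (E m) : ℝ) * r m) * (4+ε)
              = 1 + ε/4 - ((maxDeg (E m) : ℝ) * r m) * (4+ε) := by ring
          rw [hexpand]
          linarith
        linarith
      have hexp3 : Real.exp ((B m : ℝ) * (-q))
          ≤ Real.exp (-((1 + ε/8) * Real.log ((E m).card : ℝ))) := by
        apply Real.exp_le_exp.mpr
        have hh : (B m : ℝ) * (-q) = -(q * (B m : ℝ)) := by ring
        rw [hh]
        linarith
      have hrpow : Real.exp (-((1 + ε/8) * Real.log ((E m).card : ℝ)))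
          = ((E m).card : ℝ) ^ (-(1 + ε/8) : ℝ) := by
        rw [Real.rpow_def_of_pos hK0]
        ring_nf
      have hfin : ((E m).card : ℝ) * ((E m).card : ℝ) ^ (-(1 + ε/8) : ℝ)
          = ((E m).card : ℝ) ^ (-(ε/8) : ℝ) := by
        have h1 : ((E m).card : ℝ) * ((E m).card : ℝ) ^ (-(1 + ε/8) : ℝ)
            = ((E m).card : ℝ) ^ ((1 : ℝ) + -(1 + ε/8)) := by
          rw [Real.rpow_add hK0, Real.rpow_one]
        rw [h1]
        congr 1
        ring
      calc bad m ≤ ((E m).card : ℝ) * (1 - q) ^ (B m) := hbadle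
        _ ≤ ((E m).card : ℝ) * Real.exp ((B m : ℝ) * (-q)) := by
            rw [← hexp2]
            exact mul_le_mul_of_nonneg_left hexp1 (le_of_lt hK0)
        _ ≤ ((E m).card : ℝ) * Real.exp (-((1 + ε/8) * Real.log ((E m).card : ℝ))) :=
            mul_le_mul_of_nonneg_left hexp3 (le_of_lt hK0)
        _ = ((E m).card : ℝ) ^ (-(ε/8) : ℝ) := by rw [hrpow, hfin]
    have hlim : Tendsto (fun m => ((E m).card : ℝ) ^ (-(ε/8) : ℝ)) atTop (nhds 0) :=
      (tendsto_rpow_neg_atTop (by positivity)).comp (tendsto_natCast_atTop_atTop.comp hk)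
    refine squeeze_zero' ?_ hbound hlim
    filter_upwards with m
    exact bernTestsProb_nonneg (hr0 m) (hr1 m) _
  have := (tendsto_const_nhds (x := (1:ℝ)) (f := atTop)).sub hbad0
  rw [sub_zero] at this
  refine this.congr ?_
  intro m
  exact (hgood m).symm

end
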